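/- For each fixed integer s ≥ 1, the maximum over all y₁,...,y_s ∈ [-L, 0] of the expression y₁ + e^{y₁}·y₂ + e^{y₂}·y₃ + ... + e^{y_{s-1}}·y_s + e^{y_s}·(-L) tends to -∞ as L → +∞. -/
import Mathlib

/-- Iterated tower: `towerC 0 B = B`, `towerC (n+1) B = B * exp (towerC n B)`. -/
noncomputable def towerC : ℕ → ℝ → ℝ
  | 0, B => B
  | (n+1), B => B * Real.exp (towerC n B)

/-- For each fixed integer `s ≥ 1`, the maximum over all
`y₁,...,y_s ∈ [-L, 0]` of `y₁ + e^{y₁}y₂ + ⋯ + e^{y_{s-1}}y_s + e^{y_s}(-L)`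
tends to `-∞` as `L → +∞`. -/
theorem stmt_0 (s : ℕ) (hs : 1 ≤ s) :
    Filter.Tendsto (fun L : ℝ =>
      sSup ((fun y : Fin s → ℝ =>
          y ⟨0, hs⟩
            + ∑ i : Fin (s - 1),
                Real.exp (y ⟨i.1, lt_of_lt_of_le i.2 (Nat.sub_le s 1)⟩)
                  * y ⟨i.1 + 1, by omega⟩
            + Real.exp (y ⟨s - 1, by omega⟩) * (-L)) ''
        {y : Fin s → ℝ | ∀ i, y i ∈ Set.Icc (-L) 0}))
      Filter.atTop Filter.atBot := by
  rw [Filter.tendsto_atBot]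
  intro b
  set B : ℝ := max 0 (-b) with hBdef
  have hB0 : 0 ≤ B := le_max_left _ _
  filter_upwards [Filter.eventually_ge_atTop (max 0 (towerC s B) + 1)] with L hL
  have hL0 : 0 ≤ L := by
    have := le_max_left 0 (towerC s B); linarith
  have hcL : towerC s B < L := by
    have := le_max_right 0 (towerC s B); linarith
  have hne : ((fun y : Fin s → ℝ =>
          y ⟨0, hs⟩
            + ∑ i : Fin (s - 1),
                Real.exp (y ⟨i.1, lt_of_lt_of_le i.2 (Nat.sub_le s 1)⟩)
                  * y ⟨i.1 + 1, by omega⟩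
            + Real.exp (y ⟨s - 1, by omega⟩) * (-L)) ''
        {y : Fin s → ℝ | ∀ i, y i ∈ Set.Icc (-L) 0}).Nonempty := by
    refine ⟨_, ⟨fun _ => (0:ℝ), ?_, rfl⟩⟩
    intro i; exact Set.mem_Icc.mpr ⟨by show -L ≤ (0:ℝ); linarith, le_rfl⟩
  have hsup : sSup ((fun y : Fin s → ℝ =>
          y ⟨0, hs⟩
            + ∑ i : Fin (s - 1),
                Real.exp (y ⟨i.1, lt_of_lt_of_le i.2 (Nat.sub_le s 1)⟩)
                  * y ⟨i.1 + 1, by omega⟩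
            + Real.exp (y ⟨s - 1, by omega⟩) * (-L)) ''
        {y : Fin s → ℝ | ∀ i, y i ∈ Set.Icc (-L) 0}) ≤ -B := by
    refine csSup_le hne ?_
    rintro E ⟨y, hy, rfl⟩
    by_contra hEB
    push_neg at hEB
    -- each summand is nonpositive
    have hy0 : ∀ i, -L ≤ y i ∧ y i ≤ 0 := fun i => hy i
    have hterm_np : ∀ i : Fin (s-1),
        Real.exp (y ⟨i.1, lt_of_lt_of_le i.2 (Nat.sub_le s 1)⟩)
          * y ⟨i.1 + 1, by omega⟩ ≤ 0 :=
      fun i => mul_nonpos_of_nonneg_of_nonpos (Real.exp_pos _).le (hy0 _).2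
    have hsum_np : (∑ i : Fin (s - 1),
        Real.exp (y ⟨i.1, lt_of_lt_of_le i.2 (Nat.sub_le s 1)⟩)
          * y ⟨i.1 + 1, by omega⟩) ≤ 0 :=
      Finset.sum_nonpos fun i _ => hterm_np i
    have hlast_np : Real.exp (y ⟨s - 1, by omega⟩) * (-L) ≤ 0 :=
      mul_nonpos_of_nonneg_of_nonpos (Real.exp_pos _).le (by linarith)
    -- E ≤ each individual piece
    have hE0 : -B < y ⟨0, hs⟩ + ∑ i : Fin (s - 1),
                Real.exp (y ⟨i.1, lt_of_lt_of_le i.2 (Nat.sub_le s 1)⟩)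
                  * y ⟨i.1 + 1, by omega⟩
            + Real.exp (y ⟨s - 1, by omega⟩) * (-L) := hEB
    have hEy0 : -B ≤ y ⟨0, hs⟩ := by linarith
    have hEterm : ∀ i : Fin (s-1),
        -B ≤ Real.exp (y ⟨i.1, lt_of_lt_of_le i.2 (Nat.sub_le s 1)⟩)
          * y ⟨i.1 + 1, by omega⟩ := by
      intro i
      have hsub : (∑ j : Fin (s - 1),
          Real.exp (y ⟨j.1, lt_of_lt_of_le j.2 (Nat.sub_le s 1)⟩)
            * y ⟨j.1 + 1, by omega⟩)
          ≤ Real.exp (y ⟨i.1, lt_of_lt_of_le i.2 (Nat.sub_le s 1)⟩)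
            * y ⟨i.1 + 1, by omega⟩ := by
        have h6 := Finset.single_le_sum
          (f := fun j : Fin (s-1) => -(Real.exp (y ⟨j.1, lt_of_lt_of_le j.2 (Nat.sub_le s 1)⟩)
            * y ⟨j.1 + 1, by omega⟩))
          (fun j _ => neg_nonneg.mpr (hterm_np j)) (Finset.mem_univ i)
        rw [Finset.sum_neg_distrib] at h6
        exact neg_le_neg_iff.mp h6
      have h1 : y ⟨0, hs⟩ ≤ 0 := (hy0 _).2
      linarith
    have hElast : -B ≤ Real.exp (y ⟨s - 1, by omega⟩) * (-L) := by
      have h1 : y ⟨0, hs⟩ ≤ 0 := (hy0 _).2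
      linarith
    -- inductive lower bound on the coordinates
    have key : ∀ i (h : i < s), -(towerC i B) ≤ y ⟨i, h⟩ := by
      intro i
      induction i with
      | zero => intro h; simpa [towerC] using hEy0
      | succ n ih =>
        intro h
        have hn : n < s - 1 := by omega
        have hns : n < s := by omega
        have hyn : -(towerC n B) ≤ y ⟨n, hns⟩ := ih hns
        have ht := hEterm ⟨n, hn⟩
        -- ht : -B ≤ exp (y ⟨n,_⟩) * y ⟨n+1,_⟩
        have hexp : Real.exp (-(towerC n B)) ≤ Real.exp (y ⟨n, hns⟩) :=
          Real.exp_le_exp.mpr hyn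
        have hpos : (0:ℝ) < Real.exp (y ⟨n, hns⟩) := Real.exp_pos _
        have h2 : -B ≤ Real.exp (y ⟨n, hns⟩) * y ⟨n+1, h⟩ := ht
        have h3 : -B / Real.exp (y ⟨n, hns⟩) ≤ y ⟨n+1, h⟩ := by
          rw [div_le_iff₀ hpos]
          linarith [h2]
        refine le_trans ?_ h3
        rw [towerC, neg_div, neg_le_neg_iff, div_le_iff₀ hpos]
        have h4 : (1:ℝ) ≤ Real.exp (towerC n B) * Real.exp (y ⟨n, hns⟩) := by
          rw [← Real.exp_add]
          have h5 : (0:ℝ) ≤ towerC n B + y ⟨n, hns⟩ := by linarith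
          calc (1:ℝ) = Real.exp 0 := by simp
            _ ≤ _ := Real.exp_le_exp.mpr h5
        nlinarith [h4, hB0]
    -- conclude: L ≤ towerC s B, contradiction
    have hks : -(towerC (s-1) B) ≤ y ⟨s-1, by omega⟩ := key (s-1) (by omega)
    have hfin : towerC s B = B * Real.exp (towerC (s-1) B) := by
      obtain ⟨t, rfl⟩ : ∃ t, s = t + 1 := ⟨s - 1, by omega⟩
      simp [towerC]
    have hpos : (0:ℝ) < Real.exp (y ⟨s-1, by omega⟩) := Real.exp_pos _
    have hL1 : L ≤ B / Real.exp (y ⟨s-1, by omega⟩) := by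
      rw [le_div_iff₀ hpos]
      nlinarith [hElast]
    have hL2 : B / Real.exp (y ⟨s-1, by omega⟩) ≤ B * Real.exp (towerC (s-1) B) := by
      rw [div_le_iff₀ hpos]
      have h4 : (1:ℝ) ≤ Real.exp (towerC (s-1) B) * Real.exp (y ⟨s-1, by omega⟩) := by
        rw [← Real.exp_add]
        have h5 : (0:ℝ) ≤ towerC (s-1) B + y ⟨s-1, by omega⟩ := by linarith
        calc (1:ℝ) = Real.exp 0 := by simp
          _ ≤ _ := Real.exp_le_exp.mpr h5
      nlinarith [h4, hB0]
    linarith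
  calc sSup _ ≤ -B := hsup
    _ ≤ b := by have := le_max_right 0 (-b); linarith
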